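/- arXiv:2603.28830 — 5 statements merged into one kernel-verified Lean document; each statement's English description precedes it below -/
import Mathlib

section
/- For every integer k ≥ 2 and every real θ > 0, the equation z = ((θ + z)/(2θz))^k has exactly one solution z in the positive reals. -/
/-!
Writing `(θ + z) / (2θz) = 1/(2z) + 1/(2θ)` shows that the right-hand side is a continuous,
antitone function of `z > 0`, so it has at most one fixed point there. It is at least `1` at
`z = 1/2` and bounded by `(1/2 + 1/(2θ))^k` for `z ≥ 1`, so the intermediate value theorem
provides a fixed point in between.
-/

open Set Function

theorem AntitoneOn.eq_of_isFixedPt {α : Type*} [LinearOrder α] {f : α → α} {s : Set α}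
    (hf : AntitoneOn f s) {x y : α} (hx : x ∈ s) (hy : y ∈ s) (hfx : IsFixedPt f x)
    (hfy : IsFixedPt f y) : x = y := by
  rcases le_total x y with h | h
  · exact le_antisymm h (hfy ▸ hfx ▸ hf hx hy h)
  · exact le_antisymm (hfx ▸ hfy ▸ hf hy hx h) h

theorem add_div_two_mul_mul_eq_inv_add_inv {θ z : ℝ} (hθ : θ ≠ 0) (hz : z ≠ 0) :
    (θ + z) / (2 * θ * z) = (2 * z)⁻¹ + (2 * θ)⁻¹ := by
  field_simp

namespace HCBlumeCapel

noncomputable def boundaryLaw (θ : ℝ) (k : ℕ) (z : ℝ) : ℝ := ((θ + z) / (2 * θ * z)) ^ k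

variable {θ : ℝ} (k : ℕ)

theorem antitoneOn_boundaryLaw (hθ : 0 < θ) : AntitoneOn (boundaryLaw θ k) (Ioi 0) := by
  intro x (hx : 0 < x) y (hy : 0 < y) hxy
  unfold boundaryLaw
  rw [add_div_two_mul_mul_eq_inv_add_inv hθ.ne' hx.ne',
    add_div_two_mul_mul_eq_inv_add_inv hθ.ne' hy.ne']
  gcongr

theorem continuousOn_boundaryLaw (hθ : 0 < θ) : ContinuousOn (boundaryLaw θ k) (Ioi 0) := by
  intro z (hz : 0 < z)
  unfold boundaryLaw
  fun_prop (disch := positivity)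

theorem one_le_boundaryLaw_half (hθ : 0 < θ) : 1 ≤ boundaryLaw θ k (1 / 2) := by
  unfold boundaryLaw
  rw [add_div_two_mul_mul_eq_inv_add_inv hθ.ne' (by norm_num)]
  exact one_le_pow₀ (by norm_num; positivity)

theorem boundaryLaw_le_of_one_le (hθ : 0 < θ) {z : ℝ} (hz : 1 ≤ z) :
    boundaryLaw θ k z ≤ (2⁻¹ + (2 * θ)⁻¹) ^ k := by
  unfold boundaryLaw
  rw [add_div_two_mul_mul_eq_inv_add_inv hθ.ne' (by positivity)]
  gcongr
  linarith

end HCBlumeCapel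

open HCBlumeCapel

theorem hc_blume_capel_unique_positive_solution_general
    (k : ℕ) (θ : ℝ) (hθ : 0 < θ) :
    ∃! z : ℝ, 0 < z ∧ z = ((θ + z) / (2 * θ * z)) ^ k := by
  set b := max 1 ((2⁻¹ + (2 * θ)⁻¹) ^ k)
  have hb : 1 ≤ b := le_max_left _ _
  obtain ⟨z, hz, hfix⟩ := exists_mem_Icc_isFixedPt (a := 1 / 2) (b := b)
    ((continuousOn_boundaryLaw k hθ).mono fun _ hx => lt_of_lt_of_le (by norm_num) hx.1)
    (by linarith) (by linarith [one_le_boundaryLaw_half k hθ])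
    ((boundaryLaw_le_of_one_le k hθ hb).trans (le_max_right _ _))
  have hz0 : 0 < z := lt_of_lt_of_le (by norm_num) hz.1
  refine ⟨z, ⟨hz0, hfix.symm⟩, fun y ⟨hy0, hy⟩ => ?_⟩
  exact (antitoneOn_boundaryLaw k hθ).eq_of_isFixedPt hy0 hz0 hy.symm hfix

/-- For every integer `k ≥ 2` and every real `θ > 0`, the equation
`z = ((θ + z)/(2θz))^k` has exactly one solution `z` in the positive reals. -/
theorem hc_blume_capel_unique_positive_solution
    (k : ℕ) (hk : 2 ≤ k) (θ : ℝ) (hθ : 0 < θ) :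
    ∃! z : ℝ, 0 < z ∧ z = ((θ + z) / (2 * θ * z)) ^ k :=
  hc_blume_capel_unique_positive_solution_general k θ hθ
end

section
/- Let k ≥ 2 be an integer and let θ_cr = (k^k (k−1) / 2^k)^{1/(k+1)}. If θ ≥ θ_cr, then the system z1 = ((θ + z1)/(θ(z1 + z2)))^k, z2 = ((θ + z2)/(θ(z1 + z2)))^k has exactly one solution (z1, z2) with z1 > 0 and z2 > 0, and this solution satisfies z1 = z2. -/
/-!
Write `z₁ = xᵏ`, `z₂ = yᵏ` and `s = z₁ + z₂`, so that the system reads `θ s x = θ + xᵏ`,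
`θ s y = θ + yᵏ`. If `x ≠ y`, subtracting gives `θ s = Gₖ(x, y) := ∑_{i<k} xⁱ y^(k-1-i)`, and then
`θ = x y Gₖ₋₁(x, y)`, so `θ^(k+1) sᵏ = x y Gₖ₋₁ Gₖᵏ`. Pairing opposite terms of the geometric sums and
the power-mean inequality `Mₖ₋₁ᵏ ≤ Mₖ^(k-1)` for `Mⱼ = (xʲ + yʲ) / 2` bound the right-hand side
strictly by `kᵏ (k - 1) / 2ᵏ · sᵏ`, which is impossible for `θ ≥ θ_cr`. Symmetric solutions `z = xᵏ`
correspond to positive roots of `2θ x^(k+1) - xᵏ - θ`, which exist by the intermediate value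
theorem; there is only one since `((θ + z) / (2θz))ᵏ` is decreasing in `z`.
-/

open Finset

section Means

variable {x y : ℝ}

lemma pow_mul_pow_add_pow_mul_pow_le (hx : 0 ≤ x) (hy : 0 ≤ y) (i j : ℕ) :
    x ^ i * y ^ j + y ^ i * x ^ j ≤ x ^ (i + j) + y ^ (i + j) := by
  have h : 0 ≤ (x ^ i - y ^ i) * (x ^ j - y ^ j) := by
    rcases le_total x y with hxy | hxy
    · exact mul_nonneg_of_nonpos_of_nonpos (sub_nonpos.2 (pow_le_pow_left₀ hx hxy i))
        (sub_nonpos.2 (pow_le_pow_left₀ hx hxy j))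
    · exact mul_nonneg (sub_nonneg.2 (pow_le_pow_left₀ hy hxy i))
        (sub_nonneg.2 (pow_le_pow_left₀ hy hxy j))
  rw [pow_add, pow_add]
  linear_combination h

lemma pow_mul_pow_add_pow_mul_pow_lt (hx : 0 < x) (hy : 0 < y) (hxy : x ≠ y) {i j : ℕ}
    (hi : i ≠ 0) (hj : j ≠ 0) :
    x ^ i * y ^ j + y ^ i * x ^ j < x ^ (i + j) + y ^ (i + j) := by
  have h : 0 < (x ^ i - y ^ i) * (x ^ j - y ^ j) := by
    rcases hxy.lt_or_gt with hxy | hxy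
    · exact mul_pos_of_neg_of_neg (sub_neg.2 (pow_lt_pow_left₀ hxy hx.le hi))
        (sub_neg.2 (pow_lt_pow_left₀ hxy hx.le hj))
    · exact mul_pos (sub_pos.2 (pow_lt_pow_left₀ hxy hy.le hi))
        (sub_pos.2 (pow_lt_pow_left₀ hxy hy.le hj))
  rw [pow_add, pow_add]
  linear_combination h

lemma two_mul_geom_sum₂_le (hx : 0 ≤ x) (hy : 0 ≤ y) (n : ℕ) :
    2 * ∑ i ∈ range n, x ^ i * y ^ (n - 1 - i) ≤ n * (x ^ (n - 1) + y ^ (n - 1)) :=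
  calc 2 * ∑ i ∈ range n, x ^ i * y ^ (n - 1 - i)
      = ∑ i ∈ range n, (x ^ i * y ^ (n - 1 - i) + y ^ i * x ^ (n - 1 - i)) := by
        rw [sum_add_distrib, ← geom_sum₂_comm x y n]; ring
    _ ≤ ∑ _i ∈ range n, (x ^ (n - 1) + y ^ (n - 1)) := by
        refine sum_le_sum fun i hi => ?_
        have h := pow_mul_pow_add_pow_mul_pow_le hx hy i (n - 1 - i)
        rwa [Nat.add_sub_cancel' (by grind)] at h
    _ = n * (x ^ (n - 1) + y ^ (n - 1)) := by rw [sum_const, card_range, nsmul_eq_mul]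

-- `j ↦ (xʲ + yʲ) / 2` is log-convex and equals `1` at `j = 0`, so its `j`-th root increases.
lemma pow_add_pow_div_two_pow_succ_le (hx : 0 ≤ x) (hy : 0 ≤ y) (j : ℕ) :
    ((x ^ j + y ^ j) / 2) ^ (j + 1) ≤ ((x ^ (j + 1) + y ^ (j + 1)) / 2) ^ j := by
  induction j with
  | zero => norm_num
  | succ j ih =>
    set a := (x ^ j + y ^ j) / 2
    set b := (x ^ (j + 1) + y ^ (j + 1)) / 2
    set c := (x ^ (j + 1 + 1) + y ^ (j + 1 + 1)) / 2
    have hlog : b ^ 2 ≤ a * c := by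
      have h := mul_nonneg (mul_nonneg (pow_nonneg hx j) (pow_nonneg hy j)) (sq_nonneg (x - y))
      linear_combination h / 4
    have ha : 0 ≤ a := by positivity
    have hc : 0 ≤ c := by positivity
    have hb : 0 ≤ b := by positivity
    clear_value a b c
    rcases hb.eq_or_lt with hb | hb
    · rw [← hb, zero_pow (by omega)]
      positivity
    refine le_of_mul_le_mul_left ?_ (pow_pos hb j)
    calc b ^ j * b ^ (j + 1 + 1) = (b ^ 2) ^ (j + 1) := by ring
      _ ≤ (a * c) ^ (j + 1) := pow_le_pow_left₀ (by positivity) hlog _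
      _ = a ^ (j + 1) * c ^ (j + 1) := mul_pow a c _
      _ ≤ b ^ j * c ^ (j + 1) := mul_le_mul_of_nonneg_right ih (by positivity)

lemma mul_geom_sum₂_mul_geom_sum₂_pow_lt (hx : 0 < x) (hy : 0 < y) (hxy : x ≠ y) (m : ℕ) :
    x * y * (∑ i ∈ range (m + 1), x ^ i * y ^ (m - i)) *
        (∑ i ∈ range (m + 2), x ^ i * y ^ (m + 1 - i)) ^ (m + 2)
      < (m + 1) * (m + 2) ^ (m + 2) * ((x ^ (m + 2) + y ^ (m + 2)) / 2) ^ (m + 2) := by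
  set G := ∑ i ∈ range (m + 2), x ^ i * y ^ (m + 1 - i)
  set M := (x ^ (m + 2) + y ^ (m + 2)) / 2 with hM
  have hP : x * y * ∑ i ∈ range (m + 1), x ^ i * y ^ (m - i) < (m + 1) * M := by
    have h₁ := two_mul_geom_sum₂_le hx.le hy.le (m + 1)
    have h₂ := pow_mul_pow_add_pow_mul_pow_lt hx hy hxy (i := m + 1) (j := 1) (by omega) one_ne_zero
    simp only [Nat.add_sub_cancel] at h₁
    push_cast at h₁
    calc x * y * ∑ i ∈ range (m + 1), x ^ i * y ^ (m - i)
        ≤ x * y * ((m + 1) * (x ^ m + y ^ m)) / 2 := by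
          linarith [mul_le_mul_of_nonneg_left h₁ (mul_pos hx hy).le]
      _ = (m + 1) * (x ^ (m + 1) * y ^ 1 + y ^ (m + 1) * x ^ 1) / 2 := by ring
      _ < (m + 1) * M := by
          rw [mul_div_assoc]
          exact mul_lt_mul_of_pos_left (by rw [hM]; linarith) (by positivity)
  have hG : G ^ (m + 2) ≤ (m + 2) ^ (m + 2) * M ^ (m + 1) := by
    have h₁ := two_mul_geom_sum₂_le hx.le hy.le (m + 2)
    have h₂ := pow_add_pow_div_two_pow_succ_le hx.le hy.le (m + 1)
    rw [show m + 2 - 1 = m + 1 from rfl] at h₁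
    push_cast at h₁
    calc G ^ (m + 2) ≤ ((m + 2) * ((x ^ (m + 1) + y ^ (m + 1)) / 2)) ^ (m + 2) :=
          pow_le_pow_left₀ (by positivity) (by linarith) _
      _ ≤ (m + 2) ^ (m + 2) * M ^ (m + 1) := by
          rw [mul_pow]; exact mul_le_mul_of_nonneg_left h₂ (by positivity)
  calc x * y * (∑ i ∈ range (m + 1), x ^ i * y ^ (m - i)) * G ^ (m + 2)
      < (m + 1) * M * G ^ (m + 2) := mul_lt_mul_of_pos_right hP (by positivity)
    _ ≤ (m + 1) * M * ((m + 2) ^ (m + 2) * M ^ (m + 1)) :=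
        mul_le_mul_of_nonneg_left hG (by positivity)
    _ = (m + 1) * (m + 2) ^ (m + 2) * M ^ (m + 2) := by ring

end Means

section Solutions

variable {θ : ℝ}

theorem eq_of_pos_solution {k : ℕ} (hk : 2 ≤ k) (hθ : 0 < θ)
    (hcr : (k : ℝ) ^ k * (k - 1) / 2 ^ k ≤ θ ^ (k + 1)) {z₁ z₂ : ℝ} (hz₁ : 0 < z₁) (hz₂ : 0 < z₂)
    (e₁ : z₁ = ((θ + z₁) / (θ * (z₁ + z₂))) ^ k) (e₂ : z₂ = ((θ + z₂) / (θ * (z₁ + z₂))) ^ k) :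
    z₁ = z₂ := by
  obtain ⟨m, rfl⟩ : ∃ m, k = m + 2 := ⟨k - 2, by omega⟩
  by_contra hne
  set s := z₁ + z₂ with hs
  set x := (θ + z₁) / (θ * s) with hx
  set y := (θ + z₂) / (θ * s) with hy
  have hθs : 0 < θ * s := by positivity
  have hx₀ : 0 < x := by positivity
  have hy₀ : 0 < y := by positivity
  have hxθ : θ * s * x = θ + x ^ (m + 2) := by rw [← e₁, hx, mul_div_cancel₀ _ hθs.ne']
  have hyθ : θ * s * y = θ + y ^ (m + 2) := by rw [← e₂, hy, mul_div_cancel₀ _ hθs.ne']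
  have hxy : x ≠ y := fun h => hne (by rw [e₁, e₂, h])
  clear_value x y s
  have hG : θ * s = ∑ i ∈ range (m + 2), x ^ i * y ^ (m + 1 - i) := by
    refine mul_right_cancel₀ (sub_ne_zero.2 hxy) ?_
    have h := geom_sum₂_mul x y (m + 2)
    rw [show m + 2 - 1 = m + 1 from rfl] at h
    linear_combination hxθ - hyθ - h
  have hP : θ = x * y * ∑ i ∈ range (m + 1), x ^ i * y ^ (m - i) := by
    have h := geom_sum₂_succ_eq x y (n := m + 1)
    simp only [Nat.add_sub_cancel] at h
    linear_combination -hxθ + x * hG + x * h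
  have hs₀ : 0 < s := by rw [hs]; positivity
  have hlt : θ ^ (m + 3) * s ^ (m + 2)
      < (m + 1) * (m + 2) ^ (m + 2) * (s / 2) ^ (m + 2) := by
    have hs' : s = x ^ (m + 2) + y ^ (m + 2) := by rw [hs, e₁, e₂]
    calc θ ^ (m + 3) * s ^ (m + 2) = θ * (θ * s) ^ (m + 2) := by ring
      _ = x * y * (∑ i ∈ range (m + 1), x ^ i * y ^ (m - i)) *
            (∑ i ∈ range (m + 2), x ^ i * y ^ (m + 1 - i)) ^ (m + 2) := by rw [← hG, ← hP]
      _ < _ := mul_geom_sum₂_mul_geom_sum₂_pow_lt hx₀ hy₀ hxy m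
      _ = _ := by rw [hs']
  push_cast at hcr
  have hle := mul_le_mul_of_nonneg_right hcr (pow_nonneg hs₀.le (m + 2))
  have hcr_eq : (m + 1 : ℝ) * (m + 2) ^ (m + 2) * (s / 2) ^ (m + 2)
      = (m + 2) ^ (m + 2) * (m + 2 - 1) / 2 ^ (m + 2) * s ^ (m + 2) := by rw [div_pow]; ring
  linarith

theorem eq_of_pos_symmetric_solution {k : ℕ} (hk : k ≠ 0) (hθ : 0 < θ) {z w : ℝ}
    (hz : 0 < z) (hw : 0 < w) (ez : z = ((θ + z) / (θ * (z + z))) ^ k)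
    (ew : w = ((θ + w) / (θ * (w + w))) ^ k) : z = w := by
  by_contra hne
  wlog hzw : z < w generalizing z w
  · exact this hw hz ew ez (Ne.symm hne) ((not_lt.1 hzw).lt_of_ne (Ne.symm hne))
  -- the base `(θ + z) / (2 θ z) = 1 / (2 z) + 1 / (2 θ)` is strictly decreasing in `z`
  have hbase : (θ + w) / (θ * (w + w)) < (θ + z) / (θ * (z + z)) := by
    rw [div_lt_div_iff₀ (by positivity) (by positivity)]
    nlinarith [mul_pos hθ hθ]
  have := pow_lt_pow_left₀ hbase (by positivity) hk
  linarith

theorem exists_pos_symmetric_solution {k : ℕ} (hk : k ≠ 0) (hθ : 0 < θ) :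
    ∃ z, 0 < z ∧ z = ((θ + z) / (θ * (z + z))) ^ k := by
  set q : ℝ → ℝ := fun x => 2 * θ * x ^ (k + 1) - x ^ k - θ
  set M := 1 + θ⁻¹
  have hq₀ : q 0 < 0 := by simp [q, hk, hθ]
  have hqM : 0 ≤ q M := by
    have hM : 1 ≤ M ^ k := one_le_pow₀ (by simp [M, hθ.le])
    have hqM_eq : q M = M ^ k * (2 * θ + 1) - θ := by
      simp only [q, M, pow_succ]; field_simp; ring
    rw [hqM_eq]; nlinarith
  obtain ⟨x, hx, hqx⟩ : ∃ x ∈ Set.Icc 0 M, q x = 0 :=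
    intermediate_value_Icc (by positivity) (by fun_prop) ⟨hq₀.le, hqM⟩
  have hx₀ : 0 < x := hx.1.lt_of_ne (by rintro rfl; linarith)
  refine ⟨x ^ k, by positivity, ?_⟩
  have hbase : (θ + x ^ k) / (θ * (x ^ k + x ^ k)) = x := by
    rw [div_eq_iff (by positivity)]
    linear_combination -hqx
  rw [hbase]

end Solutions

/-- Let `k ≥ 2` and `θ_cr = (k^k (k−1) / 2^k)^(1/(k+1))`. If `θ ≥ θ_cr`, then the
system `z1 = ((θ + z1)/(θ(z1 + z2)))^k`, `z2 = ((θ + z2)/(θ(z1 + z2)))^k` has exactly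
one positive solution `(z1, z2)`, and this solution satisfies `z1 = z2`. -/
theorem hc_blume_capel_unique_TISGM
    (k : ℕ) (hk : 2 ≤ k) (θ : ℝ)
    (hθ : ((k : ℝ) ^ k * ((k : ℝ) - 1) / 2 ^ k) ^ ((1 : ℝ) / (k + 1)) ≤ θ) :
    (∃! p : ℝ × ℝ, 0 < p.1 ∧ 0 < p.2 ∧
        p.1 = ((θ + p.1) / (θ * (p.1 + p.2))) ^ k ∧
        p.2 = ((θ + p.2) / (θ * (p.1 + p.2))) ^ k) ∧
    (∀ p : ℝ × ℝ, 0 < p.1 → 0 < p.2 →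
        p.1 = ((θ + p.1) / (θ * (p.1 + p.2))) ^ k →
        p.2 = ((θ + p.2) / (θ * (p.1 + p.2))) ^ k →
        p.1 = p.2) := by
  have hk₀ : k ≠ 0 := by omega
  have hcr₀ : 0 < (k : ℝ) ^ k * ((k : ℝ) - 1) / 2 ^ k := by
    have : (2 : ℝ) ≤ k := by exact_mod_cast hk
    exact div_pos (mul_pos (by positivity) (by linarith)) (by positivity)
  have hθ₀ : 0 < θ := (Real.rpow_pos_of_pos hcr₀ _).trans_le hθ
  have hcr : (k : ℝ) ^ k * ((k : ℝ) - 1) / 2 ^ k ≤ θ ^ (k + 1) := by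
    have h := pow_le_pow_left₀ (by positivity) hθ (k + 1)
    rwa [one_div, ← Nat.cast_succ, Real.rpow_inv_natCast_pow hcr₀.le k.succ_ne_zero] at h
  have hsym : ∀ p : ℝ × ℝ, 0 < p.1 → 0 < p.2 →
      p.1 = ((θ + p.1) / (θ * (p.1 + p.2))) ^ k →
      p.2 = ((θ + p.2) / (θ * (p.1 + p.2))) ^ k → p.1 = p.2 :=
    fun _ h₁ h₂ e₁ e₂ => eq_of_pos_solution hk hθ₀ hcr h₁ h₂ e₁ e₂
  obtain ⟨z, hz, ez⟩ := exists_pos_symmetric_solution hk₀ hθ₀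
  refine ⟨⟨(z, z), ⟨hz, hz, ez, ez⟩, ?_⟩, hsym⟩
  rintro ⟨w, w'⟩ ⟨hw, hw', e, e'⟩
  obtain rfl : w = w' := hsym (w, w') hw hw' e e'
  obtain rfl := eq_of_pos_symmetric_solution hk₀ hθ₀ hw hz e ez
  rfl
end

section
/- Let k ≥ 4 be an integer, let 0 < θ < 1, and let z be the unique positive solution of z = ((θ + z)/(2θz))^k. Then k · (z/(z+θ))^2 > 1. -/
/-- Let `k ≥ 4`, `0 < θ < 1`, and let `z` be the unique positive solution of
`z = ((θ + z)/(2θz))^k`. Then `k · (z/(z+θ))² > 1` (Kesten–Stigum condition). -/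
theorem hc_blume_capel_kesten_stigum_small_theta
    (k : ℕ) (hk : 4 ≤ k) (θ : ℝ) (hθ0 : 0 < θ) (hθ1 : θ < 1)
    (z : ℝ) (hz : 0 < z)
    (heq : z = ((θ + z) / (2 * θ * z)) ^ k) :
    1 < (k : ℝ) * (z / (z + θ)) ^ 2 := by
  -- First show z > 1.
  have hz1 : 1 < z := by
    by_contra h
    push_neg at h
    have hden : 0 < 2 * θ * z := by positivity
    have hbase : 1 < (θ + z) / (2 * θ * z) := by
      rw [lt_div_iff₀ hden]
      nlinarith [mul_pos hθ0 hz]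
    have : 1 < ((θ + z) / (2 * θ * z)) ^ k :=
      one_lt_pow₀ hbase (by omega)
    linarith [heq ▸ this]
  -- Now z + θ < 2z, hence z/(z+θ) > 1/2.
  have hzθ : 0 < z + θ := by linarith
  have hfrac : (1 : ℝ) / 2 < z / (z + θ) := by
    rw [div_lt_div_iff₀ (by norm_num) hzθ]
    linarith
  have hsq : (1 : ℝ) / 4 < (z / (z + θ)) ^ 2 := by nlinarith
  have hk4 : (4 : ℝ) ≤ (k : ℝ) := by exact_mod_cast hk
  nlinarith
end

section
/- Let k ≥ 4 be an integer, let θ > 1, and let z be the unique positive solution of z = ((θ + z)/(2θz))^k. Then k · (θ/(z+θ))^2 > 1. -/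
/-- Let `k ≥ 4`, `θ > 1`, and let `z` be the unique positive solution of
`z = ((θ + z)/(2θz))^k`. Then `k · (θ/(z+θ))² > 1` (Kesten–Stigum condition). -/
theorem hc_blume_capel_kesten_stigum_large_theta
    (k : ℕ) (hk : 4 ≤ k) (θ : ℝ) (hθ : 1 < θ)
    (z : ℝ) (hz : 0 < z)
    (heq : z = ((θ + z) / (2 * θ * z)) ^ k) :
    1 < (k : ℝ) * (θ / (z + θ)) ^ 2 := by
  have hθ0 : 0 < θ := by linarith
  have hzθ : z < θ := by
    by_contra h
    push_neg at h
    have h1 : (θ + z) / (2 * θ * z) ≤ 1 / θ := by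
      rw [div_le_div_iff₀ (by positivity) hθ0]
      nlinarith
    have h2 : ((θ + z) / (2 * θ * z)) ^ k ≤ (1 / θ) ^ k :=
      pow_le_pow_left₀ (by positivity) h1 k
    have h3 : (1 / θ) ^ k < 1 :=
      pow_lt_one₀ (by positivity) (by rw [div_lt_one hθ0]; linarith)
        (by omega)
    nlinarith [heq ▸ h2]
  have hk4 : (4 : ℝ) ≤ (k : ℝ) := by exact_mod_cast hk
  have hpos : 0 < (z + θ) ^ 2 := by positivity
  rw [div_pow, ← mul_div_assoc, lt_div_iff₀ hpos]
  nlinarith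
end

section
/- Let k ≥ 2 be an integer, let 0 < θ < 1, and let z be the unique positive solution of z = ((θ + z)/(2θz))^k. For the 3×3 matrix P with rows (z/(z+θ), θ/(z+θ), 0), (1/2, 0, 1/2), (0, θ/(z+θ), z/(z+θ)), one has κ := (1/2) · max over pairs of rows i, j of Σ_l |P_{i,l} − P_{j,l}| = z/(z+θ). -/
/-- Let `k ≥ 2`, `0 < θ < 1`, and let `z` be the unique positive solution of
`z = ((θ + z)/(2θz))^k`. For the transition matrix `P`, the quantity
`κ = (1/2) · max_{i,j} ∑_l |P i l − P j l|` equals `z/(z+θ)`. -/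
theorem hc_blume_capel_kappa_small_theta
    (k : ℕ) (hk : 2 ≤ k) (θ : ℝ) (hθ0 : 0 < θ) (hθ1 : θ < 1)
    (z : ℝ) (hz : 0 < z)
    (heq : z = ((θ + z) / (2 * θ * z)) ^ k)
    (P : Matrix (Fin 3) (Fin 3) ℝ)
    (hP : P = !![z / (z + θ), θ / (z + θ), 0;
                 1 / 2, 0, 1 / 2;
                 0, θ / (z + θ), z / (z + θ)]) :
    (1 / 2) * ((Finset.univ : Finset (Fin 3 × Fin 3)).sup'
        (Finset.univ_nonempty) (fun ij => ∑ l, |P ij.1 l - P ij.2 l|))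
      = z / (z + θ) := by
  -- First, z > 1 (hence z > θ).
  have hz1 : 1 < z := by
    by_contra h
    push_neg at h
    have hbase : 1 < (θ + z) / (2 * θ * z) := by
      rw [lt_div_iff₀ (by positivity)]
      nlinarith
    have : 1 < ((θ + z) / (2 * θ * z)) ^ k := one_lt_pow₀ hbase (by omega)
    linarith [heq ▸ this]
  have hs : 0 < z + θ := by linarith
  have hab : z / (z + θ) + θ / (z + θ) = 1 := by field_simp
  have hhalf : 1 / 2 ≤ z / (z + θ) := by
    rw [le_div_iff₀ hs]; linarith
  have hb : 0 ≤ θ / (z + θ) := by positivity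
  have e1 : |z / (z + θ)| = z / (z + θ) := abs_of_nonneg (by positivity)
  have e2 : |θ / (z + θ)| = θ / (z + θ) := abs_of_nonneg hb
  have e3 : |z / (z + θ) - 1 / 2| = z / (z + θ) - 1 / 2 :=
    abs_of_nonneg (by linarith)
  have e4 : |(1 : ℝ) / 2| = 1 / 2 := by norm_num
  have e5 : |1 / 2 - z / (z + θ)| = z / (z + θ) - 1 / 2 := by
    rw [abs_sub_comm]; exact e3
  have hsup : (Finset.univ : Finset (Fin 3 × Fin 3)).sup'
      (Finset.univ_nonempty) (fun ij => ∑ l, |P ij.1 l - P ij.2 l|)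
      = 2 * (z / (z + θ)) := by
    apply le_antisymm
    · apply Finset.sup'_le
      intro ij _
      subst hP
      fin_cases ij <;>
        simp [Fin.sum_univ_three, e1, e2, e3, e4, e5] <;> linarith
    · have := Finset.le_sup' (f := fun ij : Fin 3 × Fin 3 =>
        ∑ l, |P ij.1 l - P ij.2 l|)
        (Finset.mem_univ ((0 : Fin 3), (2 : Fin 3)))
      refine le_trans (le_of_eq ?_) this
      subst hP
      simp [Fin.sum_univ_three, e1, e2]
      ring
  rw [hsup]; ring
end
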